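/- Let M, E be graded S-modules with linear presentations over S = ℂ[x₀,…,xₙ], and h : M → E a degree-zero graded homomorphism such that the induced map M/J²M → E/J²E is a split monomorphism of S/J²-modules. Then h is a split monomorphism. -/

import Mathlib

noncomputable section

open DirectSum

/-- A `ℤ`-graded module over a `ℂ`-algebra `A` graded by `𝒜 : ℕ → Submodule ℂ A`,
with all structure maps compatible with the gradings. -/
structure GrMod {A : Type} [Ring A] [Algebra ℂ A] (𝒜 : ℕ → Submodule ℂ A) where
  M : Type
  [acg : AddCommGroup M]
  [modA : Module A M]
  [modC : Module ℂ M]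
  [tower : IsScalarTower ℂ A M]
  gr : ℤ → Submodule ℂ M
  decomp : DirectSum.IsInternal gr
  smul_mem' : ∀ (d : ℕ) (i : ℤ) (s : A), s ∈ 𝒜 d → ∀ m ∈ gr i, s • m ∈ gr (i + d)

attribute [instance] GrMod.acg GrMod.modA GrMod.modC GrMod.tower

variable {A : Type} [Ring A] [Algebra ℂ A] {𝒜 : ℕ → Submodule ℂ A}

/-- Degree-zero graded homomorphisms between graded modules. -/
@[ext] structure GrHom (X Y : GrMod 𝒜) where
  toFun : X.M →ₗ[A] Y.M
  map_gr : ∀ i, ∀ m ∈ X.gr i, toFun m ∈ Y.gr i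

namespace GrHom

def comp {X Y Z : GrMod 𝒜} (g : GrHom Y Z) (f : GrHom X Y) : GrHom X Z :=
  ⟨g.toFun ∘ₗ f.toFun, fun i m hm => g.map_gr i _ (f.map_gr i m hm)⟩

def id (X : GrMod 𝒜) : GrHom X X := ⟨LinearMap.id, fun _ _ hm => hm⟩

def zero (X Y : GrMod 𝒜) : GrHom X Y := ⟨0, fun i _ _ => (Y.gr i).zero_mem⟩

def sub {X Y : GrMod 𝒜} (f g : GrHom X Y) : GrHom X Y :=
  ⟨f.toFun - g.toFun, fun i m hm => by
    simpa using sub_mem (f.map_gr i m hm) (g.map_gr i m hm)⟩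

end GrHom

/-- `0 → X → Y → Z → 0` is a short exact sequence of graded modules. -/
structure IsSES {X Y Z : GrMod 𝒜} (f : GrHom X Y) (g : GrHom Y Z) : Prop where
  inj : Function.Injective f.toFun
  surj : Function.Surjective g.toFun
  exact : LinearMap.range f.toFun = LinearMap.ker g.toFun

/-- A short exact sequence of graded modules splits (via a degree-zero retraction). -/
def Splits {X Y Z : GrMod 𝒜} (f : GrHom X Y) (g : GrHom Y Z) : Prop :=
  ∃ r : GrHom Y X, r.comp f = GrHom.id X

/-- Vanishing of the degree-zero part of `Ext¹(Z, X)`: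
every short exact sequence `0 → X → Y → Z → 0` of graded modules splits. -/
def Ext1Zero (Z X : GrMod 𝒜) : Prop :=
  ∀ (Y : GrMod 𝒜) (f : GrHom X Y) (g : GrHom Y Z), IsSES f g → Splits f g

/-- A graded free module all of whose basis elements lie in degree `d`. -/
def IsFreeGenInDegree (P : GrMod 𝒜) (d : ℤ) : Prop :=
  ∃ (ι : Type) (b : Module.Basis ι A P.M), ∀ j, b j ∈ P.gr d

/-- A graded free module (a free module with a homogeneous basis). -/
def IsGradedFree (P : GrMod 𝒜) : Prop :=
  ∃ (ι : Type) (b : Module.Basis ι A P.M) (d : ι → ℤ), ∀ j, b j ∈ P.gr (d j)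

/-- `X` has a linear presentation: a graded free presentation `P₁ → P₀ → X → 0`
with `P₀` generated in degree `0` and `P₁` generated in degree `1`. -/
def HasLinearPresentation (X : GrMod 𝒜) : Prop :=
  ∃ (P₁ P₀ : GrMod 𝒜) (f : GrHom P₁ P₀) (p : GrHom P₀ X),
    IsFreeGenInDegree P₁ 1 ∧ IsFreeGenInDegree P₀ 0 ∧
    Function.Surjective p.toFun ∧ LinearMap.range f.toFun = LinearMap.ker p.toFun

/-- `X` is a linear (Koszul) module: it has a graded free resolution whose `k`-th
term is generated in degree `k`. -/
def IsLinearModule (X : GrMod 𝒜) : Prop :=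
  ∃ (P : ℕ → GrMod 𝒜) (d : ∀ k, GrHom (P (k+1)) (P k)) (p : GrHom (P 0) X),
    (∀ k, IsFreeGenInDegree (P k) (k : ℤ)) ∧
    Function.Surjective p.toFun ∧
    LinearMap.range (d 0).toFun = LinearMap.ker p.toFun ∧
    ∀ k, LinearMap.range (d (k+1)).toFun = LinearMap.ker (d k).toFun

/-- `Y` is the graded shift `X(i)` of `X`, i.e. `Y_k = X_{k+i}`. -/
def IsGradedShiftOf (Y X : GrMod 𝒜) (i : ℤ) : Prop :=
  ∃ e : Y.M ≃ₗ[A] X.M,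
    (∀ k, ∀ m ∈ Y.gr k, e m ∈ X.gr (k + i)) ∧
    (∀ k, ∀ m ∈ X.gr (k + i), e.symm m ∈ Y.gr k)

/-- `ι : T → X` realizes `T` as the truncation `X_{≥ i}` of `X`. -/
structure IsTruncation (X T : GrMod 𝒜) (i : ℤ) (ι : GrHom T X) : Prop where
  inj : Function.Injective ι.toFun
  low : ∀ k, k < i → T.gr k = ⊥
  onto : ∀ k, i ≤ k → ∀ m ∈ X.gr k, ∃ t ∈ T.gr k, ι.toFun t = m

/-- `C` is a semisimple graded module concentrated in the single degree `m`. -/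
def IsSemisimpleInDegree (C : GrMod 𝒜) (m : ℤ) : Prop :=
  (∀ k, k ≠ m → C.gr k = ⊥) ∧
  ∀ (d : ℕ), 1 ≤ d → ∀ s ∈ 𝒜 d, ∀ x : C.M, s • x = 0

/-- A graded submodule of a graded module. -/
def IsGradedSubmodule (X : GrMod 𝒜) (U : Submodule A X.M) : Prop :=
  U.restrictScalars ℂ = ⨆ i, (U.restrictScalars ℂ ⊓ X.gr i)

/-- Indecomposability of a graded module. -/
def GrIndecomposable (X : GrMod 𝒜) : Prop :=
  (∃ x : X.M, x ≠ 0) ∧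
  ∀ U V : Submodule A X.M, IsGradedSubmodule X U → IsGradedSubmodule X V →
    IsCompl U V → U = ⊥ ∨ V = ⊥

/-- A graded isomorphism. -/
def IsGrIso {X Y : GrMod 𝒜} (f : GrHom X Y) : Prop :=
  Function.Bijective f.toFun ∧ ∀ i, ∀ m ∈ Y.gr i, ∃ x ∈ X.gr i, f.toFun x = m

/-- `Z` is a (first) syzygy of `B`: there is a short exact sequence `0 → Z → P → B → 0`
with `P` graded free. -/
def IsSyzygyOf (Z B : GrMod 𝒜) : Prop :=
  ∃ (P : GrMod 𝒜) (j : GrHom Z P) (p : GrHom P B), IsGradedFree P ∧ IsSES j p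

/-- `Z` is a `k`-th syzygy of `B`. -/
def IsIterSyzygyOf : ℕ → GrMod 𝒜 → GrMod 𝒜 → Prop
  | 0, Z, B => ∃ f : GrHom Z B, IsGrIso f
  | (k+1), Z, B => ∃ W : GrMod 𝒜, IsSyzygyOf Z W ∧ IsIterSyzygyOf k W B

/-- A degree-zero map factors through a graded free module, i.e. it vanishes in the
stable category of graded modules. -/
def FactorsThroughFree {X Y : GrMod 𝒜} (f : GrHom X Y) : Prop :=
  ∃ (F : GrMod 𝒜) (g : GrHom X F) (h : GrHom F Y), IsGradedFree F ∧ h.comp g = f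

/-- The polynomial ring `S = ℂ[x₀, …, xₙ]`. -/
abbrev PolyRing (n : ℕ) := MvPolynomial (Fin (n+1)) ℂ

/-- The standard grading of the polynomial ring. -/
abbrev polyGrading (n : ℕ) : ℕ → Submodule ℂ (PolyRing n) :=
  fun d => MvPolynomial.homogeneousSubmodule (Fin (n+1)) ℂ d

/-- The exterior algebra `R = Λ(x₀, …, xₙ)` over `ℂ`. -/
abbrev ExtAlg (n : ℕ) := ExteriorAlgebra ℂ (Fin (n+1) → ℂ)

/-- The standard grading of the exterior algebra. -/
abbrev extGrading (n : ℕ) : ℕ → Submodule ℂ (ExtAlg n) :=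
  fun d => LinearMap.range (ExteriorAlgebra.ι ℂ :
    (Fin (n+1) → ℂ) →ₗ[ℂ] ExtAlg n) ^ d

end

/-- The graded maximal ideal `J = (x₀, …, xₙ)` of the polynomial ring. -/
noncomputable def polyJ (n : ℕ) : Ideal (PolyRing n) :=
  Ideal.span (Set.range MvPolynomial.X)

/-- The submodule `J²X` of a graded module `X` over the polynomial ring. -/
noncomputable def JsqSub (n : ℕ) (X : GrMod (polyGrading n)) :
    Submodule (PolyRing n) X.M :=
  (polyJ n ^ 2) • (⊤ : Submodule (PolyRing n) X.M)

/-- The map `X/J²X → Y/J²Y` induced by a degree-zero graded homomorphism. -/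
noncomputable def redMap {n : ℕ} {X Y : GrMod (polyGrading n)} (f : GrHom X Y) :
    (X.M ⧸ JsqSub n X) →ₗ[PolyRing n] (Y.M ⧸ JsqSub n Y) :=
  Submodule.mapQ _ _ f.toFun (by
    refine Submodule.smul_le.2 fun s hs m _ => ?_
    simp only [Submodule.mem_comap, map_smul]
    exact Submodule.smul_mem_smul hs trivial)

/-!
A linearly presented module `M` is generated in degree `0`, so `J²M` is exactly the part of
degree `≥ 2` and `M/J²M ≅ M₀ ⊕ M₁`. Taking the degree-`0` part of the given retraction
`ρ : E/J²E → M/J²M` yields a `ℂ`-linear map `E₀ → M₀`. It respects the linear relations of `E`: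
applied to such a relation it gives an element of `M₁` whose class in `M/J²M` is, by
`S`-linearity of `ρ`, the image of zero, and `M₁ ∩ J²M = 0`. Hence it extends to a graded map
`q : E → M`, and `q ∘ h` is the identity on `M₀`, which generates `M`.
-/

open MvPolynomial DirectSum

namespace GrMod

variable {A : Type} [Ring A] [Algebra ℂ A] {𝒜 : ℕ → Submodule ℂ A} (X : GrMod 𝒜)

noncomputable instance : Decomposition X.gr := X.decomp.chooseDecomposition

noncomputable def proj (k : ℤ) : X.M →ₗ[ℂ] X.M :=
  (X.gr k).subtype ∘ₗ component ℂ ℤ (fun i => X.gr i) k ∘ₗ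
    (decomposeLinearEquiv X.gr).toLinearMap

variable {X}

theorem proj_mem (k : ℤ) (x : X.M) : X.proj k x ∈ X.gr k := Submodule.coe_mem _

theorem proj_of_mem_same {k : ℤ} {x : X.M} (hx : x ∈ X.gr k) : X.proj k x = x :=
  decompose_of_mem_same X.gr hx

theorem proj_of_mem_ne {j k : ℤ} {x : X.M} (hx : x ∈ X.gr j) (hjk : j ≠ k) : X.proj k x = 0 :=
  decompose_of_mem_ne X.gr hx hjk

theorem gr_eq_of_le_of_iSup_eq_top {B : ℤ → Submodule ℂ X.M} (hle : ∀ k, B k ≤ X.gr k)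
    (htop : ⨆ k, B k = ⊤) (k : ℤ) : X.gr k = B k := by
  refine le_antisymm (fun x hx => ?_) (hle k)
  have hproj : ⨆ j, B j ≤ (B k).comap (X.proj k) := iSup_le fun j y hy => by
    obtain rfl | hjk := eq_or_ne j k
    · simpa [proj_of_mem_same (hle j hy)] using hy
    · simp [proj_of_mem_ne (hle j hy) hjk]
  simpa [proj_of_mem_same hx] using hproj (htop ▸ Submodule.mem_top : x ∈ ⨆ j, B j)

end GrMod

theorem GrHom.exists_mem_gr_of_surjective {A : Type} [Ring A] [Algebra ℂ A]
    {𝒜 : ℕ → Submodule ℂ A} {X Y : GrMod 𝒜} (f : GrHom X Y) (hf : Function.Surjective f.toFun)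
    {k : ℤ} {y : Y.M} (hy : y ∈ Y.gr k) : ∃ x ∈ X.gr k, f.toFun x = y := by
  rwa [Y.gr_eq_of_le_of_iSup_eq_top (B := fun k => (X.gr k).map (f.toFun.restrictScalars ℂ))
    (fun k => Submodule.map_le_iff_le_comap.2 fun x hx => f.map_gr k x hx) ?_ k] at hy
  rw [← Submodule.map_iSup, X.decomp.submodule_iSup_eq_top, Submodule.map_top,
    LinearMap.range_eq_top]
  exact hf

section PolynomialRing

variable {n : ℕ}

theorem homogeneousComponent_eq_zero_of_mem_polyJ_sq {s : PolyRing n} (hs : s ∈ polyJ n ^ 2)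
    {d : ℕ} (hd : d ≤ 1) : homogeneousComponent d s = 0 := by
  ext m
  rw [coeff_homogeneousComponent, coeff_zero, ite_eq_right_iff]
  intro hm
  by_contra h
  have := (mem_pow_idealOfVars_iff 2 s).1 hs m (mem_support_iff.2 h)
  omega

theorem mem_polyJ_sq_of_mem_polyGrading {d : ℕ} (hd : 2 ≤ d) {s : PolyRing n}
    (hs : s ∈ polyGrading n d) : s ∈ polyJ n ^ 2 :=
  (mem_pow_idealOfVars_iff 2 s).2 fun m hm => by
    rw [Finsupp.degree_eq_weight_one]
    exact hd.trans_eq (hs (mem_support_iff.1 hm)).symm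

end PolynomialRing

def homogeneousMultiples (n : ℕ) {V : Type*} [SMul (PolyRing n) V] (G : Set V) (k : ℤ) :
    Set V :=
  {x | ∃ d : ℕ, (d : ℤ) = k ∧ ∃ s ∈ polyGrading n d, ∃ g ∈ G, s • g = x}

namespace GrMod

variable {n : ℕ} {X : GrMod (polyGrading n)}

theorem gr_eq_span_homogeneousMultiples {G : Set X.M} (hG : G ⊆ X.gr 0)
    (hspan : Submodule.span (PolyRing n) G = ⊤) (k : ℤ) :
    X.gr k = Submodule.span ℂ (homogeneousMultiples n G k) := by
  refine X.gr_eq_of_le_of_iSup_eq_top (fun k => Submodule.span_le.2 ?_) ?_ k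
  · rintro _ ⟨d, rfl, s, hs, g, hg, rfl⟩
    simpa using X.smul_mem' d 0 s hs g (hG hg)
  set W := ⨆ k, Submodule.span ℂ (homogeneousMultiples n G k)
  have hsmul_homogeneous (d : ℕ) (t : PolyRing n) (ht : t ∈ polyGrading n d) :
      W ≤ W.comap (DistribSMul.toLinearMap ℂ X.M t) :=
    iSup_le fun k => Submodule.span_le.2 <| by
      rintro _ ⟨d', rfl, s, hs, g, hg, rfl⟩
      refine Submodule.mem_iSup_of_mem ((d' + d : ℕ) : ℤ) (Submodule.subset_span ?_)
      exact ⟨d' + d, rfl, t * s, add_comm d' d ▸ ht.mul hs, g, hg, (smul_smul t s g).symm⟩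
  let WS : Submodule (PolyRing n) X.M :=
    { W.toAddSubmonoid with
      smul_mem' := fun t x hx => by
        change t • x ∈ W
        rw [← sum_homogeneousComponent t, Finset.sum_smul]
        exact Submodule.sum_mem W fun d _ =>
          hsmul_homogeneous d _ (homogeneousComponent_mem d t) hx }
  have hGW : G ≤ WS := fun g hg =>
    Submodule.mem_iSup_of_mem 0
      (Submodule.subset_span ⟨0, rfl, 1, isHomogeneous_one _ _, g, hg, one_smul _ g⟩)
  exact eq_top_iff.2 fun x _ => Submodule.span_le.2 hGW (hspan ▸ Submodule.mem_top)

theorem gr_eq_bot_of_neg (hX : Submodule.span (PolyRing n) (X.gr 0 : Set X.M) = ⊤) {k : ℤ}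
    (hk : k < 0) : X.gr k = ⊥ := by
  rw [gr_eq_span_homogeneousMultiples subset_rfl hX, Submodule.span_eq_bot]
  rintro _ ⟨d, hd, -⟩
  omega

theorem gr_le_Jsq (hX : Submodule.span (PolyRing n) (X.gr 0 : Set X.M) = ⊤) {k : ℤ}
    (hk : 2 ≤ k) : X.gr k ≤ (JsqSub n X).restrictScalars ℂ := by
  rw [gr_eq_span_homogeneousMultiples subset_rfl hX, Submodule.span_le]
  rintro _ ⟨d, rfl, s, hs, g, -, rfl⟩
  exact (Submodule.smul_mem_smul (mem_polyJ_sq_of_mem_polyGrading (by omega) hs)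
    Submodule.mem_top : s • g ∈ JsqSub n X)

theorem proj_eq_zero_of_mem_Jsq (hneg : ∀ k < 0, X.gr k = ⊥) {j : ℤ} (hj : j ≤ 1) {x : X.M}
    (hx : x ∈ JsqSub n X) : X.proj j x = 0 := by
  refine Submodule.smul_induction_on hx (fun s hs m _ => ?_) fun a b ha hb => by
    rw [map_add, ha, hb, add_zero]
  suffices ⨆ k, X.gr k ≤ LinearMap.ker ((X.proj j).comp (DistribSMul.toLinearMap ℂ X.M s)) by
    exact this (X.decomp.submodule_iSup_eq_top ▸ Submodule.mem_top)
  refine iSup_le fun k y hy => ?_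
  obtain hk | hk := lt_or_ge k 0
  · rw [hneg k hk] at hy
    simp [(Submodule.mem_bot ℂ).1 hy]
  rw [LinearMap.mem_ker, LinearMap.comp_apply, DistribSMul.toLinearMap_apply,
    ← sum_homogeneousComponent s, Finset.sum_smul, map_sum]
  refine Finset.sum_eq_zero fun d _ => ?_
  obtain hd | hd := le_or_gt d 1
  · rw [homogeneousComponent_eq_zero_of_mem_polyJ_sq hs hd, zero_smul, map_zero]
  · exact proj_of_mem_ne (X.smul_mem' d k _ (homogeneousComponent_mem d s) y hy) (by omega)

theorem eq_zero_of_mem_gr_one_of_mem_Jsq (hneg : ∀ k < 0, X.gr k = ⊥) {x : X.M}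
    (h1 : x ∈ X.gr 1) (hx : x ∈ JsqSub n X) : x = 0 := by
  rw [← proj_of_mem_same h1, proj_eq_zero_of_mem_Jsq hneg le_rfl hx]

theorem exists_degreeZeroPart (hX : Submodule.span (PolyRing n) (X.gr 0 : Set X.M) = ⊤) :
    ∃ τ : (X.M ⧸ JsqSub n X) →ₗ[ℂ] X.M, (∀ y, τ y ∈ X.gr 0) ∧
      (∀ x ∈ X.gr 0, τ (Submodule.Quotient.mk x) = x) ∧
      ∀ s ∈ polyGrading n 1, ∀ y, Submodule.Quotient.mk (s • τ y) = s • y := by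
  have hker : (JsqSub n X).restrictScalars ℂ ≤ LinearMap.ker (X.proj 0) := fun x hx =>
    proj_eq_zero_of_mem_Jsq (fun _ => gr_eq_bot_of_neg hX) zero_le_one hx
  refine ⟨((JsqSub n X).restrictScalars ℂ).liftQ (X.proj 0) hker ∘ₗ
    (Submodule.Quotient.restrictScalarsEquiv ℂ (JsqSub n X)).symm.toLinearMap,
    fun y => ?_, fun x hx => proj_of_mem_same hx, fun s hs y => ?_⟩
  · obtain ⟨x, rfl⟩ := Submodule.Quotient.mk_surjective _ y
    exact proj_mem 0 x
  obtain ⟨x, rfl⟩ := Submodule.Quotient.mk_surjective _ y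
  show Submodule.Quotient.mk (s • X.proj 0 x) = s • Submodule.Quotient.mk x
  rw [← Submodule.Quotient.mk_smul, eq_comm, Submodule.Quotient.eq, ← smul_sub]
  suffices ⨆ k, X.gr k ≤ ((JsqSub n X).restrictScalars ℂ).comap
      (DistribSMul.toLinearMap ℂ X.M s ∘ₗ (LinearMap.id - X.proj 0)) by
    exact this (X.decomp.submodule_iSup_eq_top ▸ Submodule.mem_top)
  refine iSup_le fun k y hy => ?_
  obtain hk | rfl | hk : k < 0 ∨ k = 0 ∨ 1 ≤ k := by omega
  · rw [gr_eq_bot_of_neg hX hk] at hy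
    simp [(Submodule.mem_bot ℂ).1 hy]
  · simp [proj_of_mem_same hy]
  · have hsy := X.smul_mem' 1 k s hs y hy
    simpa [proj_of_mem_ne hy (by omega : k ≠ 0)] using gr_le_Jsq hX (by omega) hsy

end GrMod

namespace HasLinearPresentation

variable {n : ℕ}

theorem span_gr_zero_eq_top {X : GrMod (polyGrading n)} (hX : HasLinearPresentation X) :
    Submodule.span (PolyRing n) (X.gr 0 : Set X.M) = ⊤ := by
  obtain ⟨-, P₀, -, p, -, ⟨ι, b, hb⟩, hp, -⟩ := hX
  rw [eq_top_iff, ← LinearMap.range_eq_top.2 hp, LinearMap.range_eq_map, ← b.span_eq,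
    Submodule.map_span, Submodule.span_le, ← Set.range_comp, Set.range_subset_iff]
  exact fun i => Submodule.subset_span (p.map_gr 0 _ (hb i))

/-- The last two hypotheses say that `φ` respects the linear relations of `E`, tested through
`κ`, which is faithful in degree `1`. -/
theorem exists_grHom_eq_on_gr_zero {E Y : GrMod (polyGrading n)} (hE : HasLinearPresentation E)
    {Z : Type*} [AddCommGroup Z] [Module (PolyRing n) Z] [Module ℂ Z]
    [IsScalarTower ℂ (PolyRing n) Z]
    (φ : E.M →ₗ[ℂ] Y.M) (hφ : ∀ e ∈ E.gr 0, φ e ∈ Y.gr 0)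
    (χ : E.M →ₗ[PolyRing n] Z) (κ : Y.M →ₗ[PolyRing n] Z)
    (hκ : ∀ y ∈ Y.gr 1, κ y = 0 → y = 0)
    (hφχ : ∀ s ∈ polyGrading n 1, ∀ e ∈ E.gr 0, κ (s • φ e) = s • χ e) :
    ∃ q : GrHom E Y, ∀ e ∈ E.gr 0, q.toFun e = φ e := by
  obtain ⟨_, P₀, f, π, ⟨_, b₁, hb₁⟩, ⟨ι₀, b₀, hb₀⟩, hπ, hfπ⟩ := hE
  have hgr := P₀.gr_eq_span_homogeneousMultiples (Set.range_subset_iff.2 hb₀) b₀.span_eq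
  let Q : P₀.M →ₗ[PolyRing n] Y.M := b₀.constr ℂ fun i => φ (π.toFun (b₀ i))
  have hQb (s : PolyRing n) (i : ι₀) : Q (s • b₀ i) = s • φ (π.toFun (b₀ i)) := by
    rw [map_smul, Module.Basis.constr_basis]
  have hQ_gr (k : ℤ) : P₀.gr k ≤ (Y.gr k).comap (Q.restrictScalars ℂ) := by
    rw [hgr k, Submodule.span_le]
    rintro _ ⟨d, rfl, s, hs, _, ⟨i, rfl⟩, rfl⟩
    simpa [hQb] using Y.smul_mem' d 0 s hs _ (hφ _ (π.map_gr 0 _ (hb₀ i)))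
  have hQ₀ : Set.EqOn (Q.restrictScalars ℂ) (φ ∘ₗ π.toFun.restrictScalars ℂ) (P₀.gr 0) := by
    rw [hgr 0]
    refine LinearMap.eqOn_span' ?_
    rintro _ ⟨d, hd, s, hs, _, ⟨i, rfl⟩, rfl⟩
    obtain rfl : d = 0 := by omega
    change s ∈ homogeneousSubmodule _ ℂ 0 at hs
    rw [homogeneousSubmodule_zero, Submodule.mem_one] at hs
    obtain ⟨a, rfl⟩ := hs
    simp only [LinearMap.restrictScalars_apply, LinearMap.comp_apply, algebraMap_smul,
      LinearMap.map_smul_of_tower, Q, Module.Basis.constr_basis]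
  have hQ₁ : Set.EqOn ((κ ∘ₗ Q).restrictScalars ℂ) ((χ ∘ₗ π.toFun).restrictScalars ℂ)
      (P₀.gr 1) := by
    rw [hgr 1]
    refine LinearMap.eqOn_span' ?_
    rintro _ ⟨d, hd, s, hs, _, ⟨i, rfl⟩, rfl⟩
    obtain rfl : d = 1 := by omega
    simp [hQb, hφχ s hs _ (π.map_gr 0 _ (hb₀ i))]
  have hQf : Q ∘ₗ f.toFun = 0 := b₁.ext fun j => by
    have hz : f.toFun (b₁ j) ∈ P₀.gr 1 := f.map_gr 1 _ (hb₁ j)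
    have hπz : π.toFun (f.toFun (b₁ j)) = 0 := by
      rw [← LinearMap.mem_ker, ← hfπ]
      exact LinearMap.mem_range_self _ _
    refine hκ _ (hQ_gr 1 hz) ?_
    simpa [hπz] using hQ₁ hz
  have hker : LinearMap.ker π.toFun ≤ LinearMap.ker Q :=
    hfπ ▸ LinearMap.range_le_ker_iff.2 hQf
  let q : E.M →ₗ[PolyRing n] Y.M :=
    (LinearMap.ker π.toFun).liftQ Q hker ∘ₗ (π.toFun.quotKerEquivOfSurjective hπ).symm.toLinearMap
  have hqπ (z : P₀.M) : q (π.toFun z) = Q z := by simp [q]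
  refine ⟨⟨q, fun k e he => ?_⟩, fun e he => ?_⟩
  · obtain ⟨z, hz, rfl⟩ := π.exists_mem_gr_of_surjective hπ he
    rw [hqπ]
    exact hQ_gr k hz
  · obtain ⟨z, hz, rfl⟩ := π.exists_mem_gr_of_surjective hπ he
    exact (hqπ z).trans (hQ₀ hz)

end HasLinearPresentation

/-- Let `M`, `E` be graded modules with linear presentations over
`S = ℂ[x₀,…,xₙ]` and let `h : M → E` be a degree-zero graded homomorphism such
that the induced map `M/J²M → E/J²E` is a split monomorphism of `S/J²`-modules.
Then `h` itself is a split monomorphism: it admits a degree-zero left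
inverse. -/
theorem stmt19 {n : ℕ} (M E : GrMod (polyGrading n))
    (hM : HasLinearPresentation M) (hE : HasLinearPresentation E)
    (h : GrHom M E)
    (hred : ∃ ρ : (E.M ⧸ JsqSub n E) →ₗ[PolyRing n] (M.M ⧸ JsqSub n M),
      ρ ∘ₗ redMap h = LinearMap.id) :
    ∃ q : GrHom E M, q.comp h = GrHom.id M := by
  obtain ⟨ρ, hρ⟩ := hred
  have hM₀ := hM.span_gr_zero_eq_top
  obtain ⟨τ, hτ_mem, hτ_mk, hτ_smul⟩ := M.exists_degreeZeroPart hM₀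
  let χ := ρ ∘ₗ (JsqSub n E).mkQ
  obtain ⟨q, hq⟩ := hE.exists_grHom_eq_on_gr_zero (τ ∘ₗ χ.restrictScalars ℂ)
    (fun e _ => hτ_mem _) χ (JsqSub n M).mkQ
    (fun y hy hy0 => M.eq_zero_of_mem_gr_one_of_mem_Jsq (fun _ => M.gr_eq_bot_of_neg hM₀) hy
      ((Submodule.Quotient.mk_eq_zero _).1 hy0))
    (fun s hs e _ => hτ_smul s hs _)
  refine ⟨q, GrHom.ext (LinearMap.ext_on hM₀ fun m hm => ?_)⟩
  calc q.toFun (h.toFun m) = τ (ρ (redMap h (Submodule.Quotient.mk m))) := hq _ (h.map_gr 0 m hm)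
    _ = m := by rw [← LinearMap.comp_apply ρ, hρ, LinearMap.id_apply, hτ_mk m hm]
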